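/- Let (b_i)_{i in I_0} be real numbers with b_i in [0,1] for each i in I_0. If the p-values (p_1,...,p_n) are PRDS on I_0, then P( intersection over i in I_0 of {p_i > b_i} ) >= product over i in I_0 of P(p_i > b_i). -/

import Mathlib

/-!
Induct on `I0`. When a coordinate `i` is added to `S`, the event `{p_j > b_j for all j ∈ S}` is
the preimage under `p` of an upper set, so its indicator is a monotone function `f` of `p`. PRDS
gives `E[f(p) | p_i] = g(p_i)` with `g` monotone, and pulling the bounded factor `1{p_i > b_i}` out
of the conditional expectation turns `P(p_i > b_i, p_j > b_j for j ∈ S)` into `E[h(p_i) g(p_i)]`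
with `h = 1_(b_i, ∞)`. Both `h` and `g` are monotone, so Chebyshev's association inequality,
obtained by integrating `(h x - h y)(g x - g y) ≥ 0` against the square of the law of `p_i`,
bounds this below by `P(p_i > b_i) · P(p_j > b_j for j ∈ S)`.
-/

open MeasureTheory

noncomputable section

/-- Positive regression dependence on the subset `I` (PRDS). -/
def PRDS {Ω : Type*} {n : ℕ} [MeasurableSpace Ω] (μ : Measure Ω) (p : Fin n → Ω → ℝ)
    (I : Finset (Fin n)) : Prop :=
  ∀ i ∈ I, ∀ f : (Fin n → ℝ) → ℝ, Monotone f →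
    Integrable (fun ω => f fun j => p j ω) μ →
      ∃ g : ℝ → ℝ, Monotone g ∧
        (fun ω => g (p i ω))
          =ᵐ[μ] μ[(fun ω => f fun j => p j ω)|MeasurableSpace.comap (p i) inferInstance]

theorem Monovary.integral_mul_integral_le_integral_mul {α : Type*} [MeasurableSpace α]
    {ν : Measure α} [IsProbabilityMeasure ν] {u v : α → ℝ} (huv : Monovary u v)
    (hu : Integrable u ν) (hv : Integrable v ν) (huv_int : Integrable (fun x => u x * v x) ν) :
    (∫ x, u x ∂ν) * ∫ x, v x ∂ν ≤ ∫ x, u x * v x ∂ν := by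
  have h_rearr : ∫ z : α × α, u z.1 * v z.2 + v z.1 * u z.2 ∂ν.prod ν ≤
      ∫ z : α × α, u z.1 * v z.1 + u z.2 * v z.2 ∂ν.prod ν :=
    integral_mono ((hu.mul_prod hv).add (hv.mul_prod hu))
      ((huv_int.comp_fst ν).add (huv_int.comp_snd ν)) fun z => by
        simpa only [mul_comm (v z.1)] using huv.mul_add_mul_le_mul_add_mul z.1 z.2
  rw [integral_add (hu.mul_prod hv) (hv.mul_prod hu),
    integral_add (huv_int.comp_fst ν) (huv_int.comp_snd ν), integral_prod_mul, integral_prod_mul,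
    integral_fun_fst (fun x => u x * v x), integral_fun_snd (fun x => u x * v x)] at h_rearr
  simp only [probReal_univ, one_smul] at h_rearr
  linarith [mul_comm (∫ x, u x ∂ν) (∫ x, v x ∂ν)]

theorem IsUpperSet.monotone_indicator_one {α M : Type*} [Preorder α] [Preorder M] [Zero M] [One M]
    [ZeroLEOneClass M] {s : Set α} (hs : IsUpperSet s) : Monotone (s.indicator (1 : α → M)) := by
  intro x y hxy
  by_cases hx : x ∈ s
  · simp [hx, hs hxy hx]
  · rw [Set.indicator_of_notMem hx]
    exact Set.indicator_nonneg (fun _ _ => zero_le_one) y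

section PRDS

variable {Ω : Type*} {n : ℕ} {mΩ : MeasurableSpace Ω} {μ : Measure Ω} [IsProbabilityMeasure μ]
  {p : Fin n → Ω → ℝ} {I : Finset (Fin n)}

theorem PRDS.integral_mul_integral_le_integral_mul (hprds : PRDS μ p I) {i : Fin n} (hi : i ∈ I)
    (hpi : Measurable (p i)) {f : (Fin n → ℝ) → ℝ} (hf : Monotone f)
    (hfi : Integrable (fun ω => f fun j => p j ω) μ) {h : ℝ → ℝ} (hh : Monotone h) {C : ℝ}
    (hC : ∀ x, ‖h x‖ ≤ C) :
    (∫ ω, h (p i ω) ∂μ) * ∫ ω, f (fun j => p j ω) ∂μ ≤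
      ∫ ω, h (p i ω) * f (fun j => p j ω) ∂μ := by
  obtain ⟨g, hg, hgF⟩ := hprds i hi f hf hfi
  have hm : MeasurableSpace.comap (p i) inferInstance ≤ mΩ := hpi.comap_le
  set ν := μ.map (p i)
  have : IsProbabilityMeasure ν := Measure.isProbabilityMeasure_map hpi.aemeasurable
  have hH : StronglyMeasurable[MeasurableSpace.comap (p i) inferInstance] fun ω => h (p i ω) :=
    (hh.measurable.comp (Measurable.of_comap_le le_rfl)).stronglyMeasurable
  have hgν : Integrable g ν :=
    (integrable_map_measure hg.measurable.aestronglyMeasurable hpi.aemeasurable).2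
      (integrable_condExp.congr hgF.symm)
  have hhν : Integrable h ν :=
    .of_bound hh.measurable.aestronglyMeasurable C (ae_of_all _ hC)
  have h_int_f : ∫ ω, f (fun j => p j ω) ∂μ = ∫ x, g x ∂ν := by
    rw [← integral_condExp hm, ← integral_congr_ae hgF,
      integral_map hpi.aemeasurable hg.measurable.aestronglyMeasurable]
  have h_int_hf : ∫ ω, h (p i ω) * f (fun j => p j ω) ∂μ = ∫ x, h x * g x ∂ν := by
    have hpull := condExp_stronglyMeasurable_mul_of_bound hm hH hfi C (ae_of_all _ fun ω => hC _)
    rw [← integral_condExp hm, integral_map (f := fun x => h x * g x) hpi.aemeasurable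
      (hh.measurable.mul hg.measurable).aestronglyMeasurable]
    exact integral_congr_ae (hpull.trans (hgF.mono fun ω hω => by simp [hω]))
  rw [h_int_f, h_int_hf, ← integral_map hpi.aemeasurable hh.measurable.aestronglyMeasurable]
  exact (hh.monovary hg).integral_mul_integral_le_integral_mul hhν hgν
    (hgν.bdd_mul hh.measurable.aestronglyMeasurable (ae_of_all _ hC))

theorem PRDS.measureReal_mul_le_measureReal_inter (hprds : PRDS μ p I) {i : Fin n} (hi : i ∈ I)
    (hpm : ∀ j, Measurable (p j)) (b : ℝ) {U : Set (Fin n → ℝ)} (hU : IsUpperSet U)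
    (hUm : MeasurableSet U) :
    μ.real {ω | b < p i ω} * μ.real {ω | (fun j => p j ω) ∈ U} ≤
      μ.real ({ω | b < p i ω} ∩ {ω | (fun j => p j ω) ∈ U}) := by
  have hA : MeasurableSet {ω | b < p i ω} := hpm i measurableSet_Ioi
  have hB : MeasurableSet {ω | (fun j => p j ω) ∈ U} := measurable_pi_lambda _ hpm hUm
  have hcov := hprds.integral_mul_integral_le_integral_mul (f := U.indicator 1)
    (h := (Set.Ioi b).indicator 1) hi (hpm i) hU.monotone_indicator_one
    ((integrable_const (1 : ℝ)).indicator hB) (isUpperSet_Ioi b).monotone_indicator_one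
    (C := 1) fun x => by by_cases hx : x ∈ Set.Ioi b <;> simp [hx]
  change (∫ ω, {ω | b < p i ω}.indicator 1 ω ∂μ) *
      (∫ ω, {ω | (fun j => p j ω) ∈ U}.indicator 1 ω ∂μ) ≤
    ∫ ω, {ω | b < p i ω}.indicator 1 ω * {ω | (fun j => p j ω) ∈ U}.indicator 1 ω ∂μ at hcov
  rw [integral_indicator_one hA, integral_indicator_one hB] at hcov
  rw [← integral_indicator_one (hA.inter hB), Set.inter_indicator_one]
  exact hcov

theorem PRDS.prod_measureReal_le_measureReal_forall (hprds : PRDS μ p I)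
    (hpm : ∀ j, Measurable (p j)) (b : Fin n → ℝ) {S : Finset (Fin n)} (hS : S ⊆ I) :
    ∏ i ∈ S, μ.real {ω | b i < p i ω} ≤ μ.real {ω | ∀ i ∈ S, b i < p i ω} := by
  induction S using Finset.induction_on with
  | empty => simp
  | insert i S hiS ih =>
    have hU : IsUpperSet {x : Fin n → ℝ | ∀ j ∈ S, b j < x j} :=
      fun x y hxy hx j hj => (hx j hj).trans_le (hxy j)
    have hUm : MeasurableSet {x : Fin n → ℝ | ∀ j ∈ S, b j < x j} := by measurability
    rw [Finset.prod_insert hiS]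
    calc _ ≤ μ.real {ω | b i < p i ω} * μ.real {ω | ∀ j ∈ S, b j < p j ω} :=
          mul_le_mul_of_nonneg_left (ih (Finset.insert_subset_iff.1 hS).2) measureReal_nonneg
      _ ≤ _ := hprds.measureReal_mul_le_measureReal_inter (hS (Finset.mem_insert_self i S)) hpm
          (b i) hU hUm
      _ = _ := by
        congr 1
        ext ω
        simp

end PRDS

theorem prds_positive_quadrant_dependence_general {Ω : Type*} {n : ℕ} [MeasurableSpace Ω]
    (μ : Measure Ω) [IsProbabilityMeasure μ] (p : Fin n → Ω → ℝ)
    (I0 : Finset (Fin n)) (hpm : ∀ i, Measurable (p i)) (b : Fin n → ℝ)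
    (hprds : PRDS μ p I0) :
    ∏ i ∈ I0, μ {ω | b i < p i ω} ≤ μ {ω | ∀ i ∈ I0, b i < p i ω} := by
  rw [← ENNReal.toReal_le_toReal (ENNReal.prod_ne_top fun i _ => measure_ne_top μ _)
    (measure_ne_top μ _), ENNReal.toReal_prod]
  exact hprds.prod_measureReal_le_measureReal_forall hpm b subset_rfl

/-- under PRDS on `I_0`,
`P(⋂_{i∈I_0} {p_i > b_i}) ≥ ∏_{i∈I_0} P(p_i > b_i)`. -/
theorem prds_positive_quadrant_dependence {Ω : Type*} {n : ℕ} [MeasurableSpace Ω]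
    (μ : Measure Ω) [IsProbabilityMeasure μ] (p : Fin n → Ω → ℝ)
    (I0 : Finset (Fin n)) (hI0 : I0.Nonempty)
    (hp01 : ∀ i ω, p i ω ∈ Set.Icc (0 : ℝ) 1) (hpm : ∀ i, Measurable (p i))
    (b : Fin n → ℝ) (hb : ∀ i ∈ I0, b i ∈ Set.Icc (0 : ℝ) 1)
    (hprds : PRDS μ p I0) :
    ∏ i ∈ I0, μ {ω | b i < p i ω} ≤ μ {ω | ∀ i ∈ I0, b i < p i ω} :=
  prds_positive_quadrant_dependence_general μ p I0 hpm b hprds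

end
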